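/- In the rPCTL* path semantics, for every DTMC M, every path π of M, and every path formula Φ whose suffix values V_M(π[n..], Φ) all lie in B4: (i) for every b ∈ B4, V_M(π, ◊̇Φ) ⪰ b if and only if V_M(π[n..], Φ) ⪰ b for some n ∈ ℕ; and (ii) V_M(π, □̇Φ) ⪰ 1111 iff V_M(π[n..], Φ) = 1111 for all n, V_M(π, □̇Φ) ⪰ 0111 iff V_M(π[n..], Φ) ⪰ 0111 for all but finitely many n, V_M(π, □̇Φ) ⪰ 0011 iff V_M(π[n..], Φ) ⪰ 0011 for infinitely many n, and V_M(π, □̇Φ) ⪰ 0001 iff V_M(π[n..], Φ) ⪰ 0001 for some n. -/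
import Mathlib


open MeasureTheory
open scoped Classical ENNReal NNReal

/-! ### Discrete-time Markov chains, paths, cylinder sets -/

/-- A discrete-time Markov chain over atomic propositions `AP` with a finite
state set `S`, an initial state, a stochastic transition function with values
in `[0,1]`, and a labeling function. -/
structure DTMC (AP : Type) (S : Type) [Fintype S] where
  init : S
  trans : S → S → ℝ≥0
  trans_le_one : ∀ s s', trans s s' ≤ 1
  trans_sum_one : ∀ s, ∑ s', trans s s' = 1
  label : S → Set AP

namespace DTMC

variable {AP S : Type} [Fintype S]

/-- Paths of `M` starting in `s`. -/
def Path (M : DTMC AP S) (s : S) : Type :=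
  { π : ℕ → S // π 0 = s ∧ ∀ n, 0 < M.trans (π n) (π (n + 1)) }

/-- Paths of `M` (with arbitrary first state). -/
def PathU (M : DTMC AP S) : Type :=
  { π : ℕ → S // ∀ n, 0 < M.trans (π n) (π (n + 1)) }

/-- Forget the start state of a path. -/
def Path.toU {M : DTMC AP S} {s : S} (π : M.Path s) : M.PathU :=
  ⟨π.1, π.2.2⟩

/-- The suffix `π[n..]` of a path. -/
def PathU.suffix {M : DTMC AP S} (π : M.PathU) (n : ℕ) : M.PathU :=
  ⟨fun i => π.1 (n + i), fun i => π.2 (n + i)⟩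

/-- `ρ 0, …, ρ n` is a path prefix of `M` starting in `s`. -/
def IsPrefix (M : DTMC AP S) (s : S) (ρ : ℕ → S) (n : ℕ) : Prop :=
  ρ 0 = s ∧ ∀ i < n, 0 < M.trans (ρ i) (ρ (i + 1))

/-- The cylinder set of the prefix `ρ 0, …, ρ n`: all paths starting in `s`
that extend this prefix. -/
def Cyl (M : DTMC AP S) (s : S) (ρ : ℕ → S) (n : ℕ) : Set (M.Path s) :=
  { π | ∀ i ≤ n, π.1 i = ρ i }

/-- The σ-algebra on `Paths(M,s)` generated by the cylinder sets. -/
instance instMeasurableSpacePath (M : DTMC AP S) (s : S) : MeasurableSpace (M.Path s) :=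
  .generateFrom { A | ∃ ρ n, M.IsPrefix s ρ n ∧ A = M.Cyl s ρ n }

/-- `μ` is a probability measure on `Paths(M,s)` giving each cylinder set the
product of the transition probabilities along its prefix. -/
def IsCylinderMeasure (M : DTMC AP S) (s : S) (μ : Measure (M.Path s)) : Prop :=
  IsProbabilityMeasure μ ∧
    ∀ ρ n, M.IsPrefix s ρ n →
      μ (M.Cyl s ρ n) = ∏ j ∈ Finset.range n, (M.trans (ρ j) (ρ (j + 1)) : ℝ≥0∞)

/-- Paths staying in `S'` forever. -/
def Safe (M : DTMC AP S) (s : S) (S' : Set S) : Set (M.Path s) :=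
  { π | ∀ n, π.1 n ∈ S' }

/-- Paths staying in `S'` from some point on (all but finitely many positions). -/
def CoBuchi (M : DTMC AP S) (s : S) (S' : Set S) : Set (M.Path s) :=
  { π | ∃ m, ∀ n, m ≤ n → π.1 n ∈ S' }

/-- Paths visiting `S'` infinitely often. -/
def Buchi (M : DTMC AP S) (s : S) (S' : Set S) : Set (M.Path s) :=
  { π | ∀ m, ∃ n, m ≤ n ∧ π.1 n ∈ S' }

/-- Paths visiting `S'` at least once. -/
def Reach (M : DTMC AP S) (s : S) (S' : Set S) : Set (M.Path s) :=
  { π | ∃ n, π.1 n ∈ S' }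

end DTMC

/-! ### Truth values -/

/-- Four-bit truth values `b₁b₂b₃b₄`. -/
structure TV where
  b1 : Bool
  b2 : Bool
  b3 : Bool
  b4 : Bool
deriving DecidableEq

namespace TV

/-- The truth value `1111`. -/
def top : TV := ⟨true, true, true, true⟩

/-- The truth value `0000`. -/
def bot : TV := ⟨false, false, false, false⟩

instance : LE TV := ⟨fun v w => v.b1 ≤ w.b1 ∧ v.b2 ≤ w.b2 ∧ v.b3 ≤ w.b3 ∧ v.b4 ≤ w.b4⟩

instance : LT TV := ⟨fun v w => v ≤ w ∧ ¬w ≤ v⟩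

/-- Minimum (bitwise). -/
def inf (v w : TV) : TV := ⟨v.b1 && w.b1, v.b2 && w.b2, v.b3 && w.b3, v.b4 && w.b4⟩

/-- Maximum (bitwise). -/
def sup (v w : TV) : TV := ⟨v.b1 || w.b1, v.b2 || w.b2, v.b3 || w.b3, v.b4 || w.b4⟩

/-- `v` lies in `B4`, i.e. its bits are monotonically nondecreasing. -/
def InB4 (v : TV) : Prop := v.b1 ≤ v.b2 ∧ v.b2 ≤ v.b3 ∧ v.b3 ≤ v.b4

end TV

/-- The five truth values `1111 ≻ 0111 ≻ 0011 ≻ 0001 ≻ 0000`. -/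
inductive B4 : Type
  | t1111 | t0111 | t0011 | t0001 | t0000
deriving DecidableEq

/-- The bit vector of an element of `B4`. -/
def B4.toTV : B4 → TV
  | .t1111 => ⟨true, true, true, true⟩
  | .t0111 => ⟨false, true, true, true⟩
  | .t0011 => ⟨false, false, true, true⟩
  | .t0001 => ⟨false, false, false, true⟩
  | .t0000 => ⟨false, false, false, false⟩

/-- `v ⪰ t` for a truth value `v` and `t ∈ B4`: if `t` has `k` leading zeros,
then `v ⪰ t` is determined by bit `k+1` of `v`. -/
def TV.ge4 (v : TV) : B4 → Prop
  | .t1111 => v.b1 = true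
  | .t0111 => v.b2 = true
  | .t0011 => v.b3 = true
  | .t0001 => v.b4 = true
  | .t0000 => True

/-- The Boolean truth value of a proposition. -/
noncomputable def boolOf (P : Prop) : Bool := @decide P (Classical.propDecidable P)

/-- Comparison operators `∼ ∈ {<, ≤, =, ≥, >}` for probability thresholds. -/
inductive PCmp : Type
  | lt | le | eq | ge | gt

/-- `PCmp.holds c a b` expresses `a ∼ b`. -/
def PCmp.holds : PCmp → ℝ≥0∞ → ℝ≥0∞ → Prop
  | .lt, a, b => a < b
  | .le, a, b => a ≤ b
  | .eq, a, b => a = b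
  | .ge, a, b => b ≤ a
  | .gt, a, b => b < a

/-- Rational probability thresholds `λ ∈ [0,1] ∩ ℚ`. -/
abbrev QProb : Type := Set.Icc (0 : ℚ) 1

/-- The threshold as an extended nonnegative real. -/
noncomputable def QProb.toENNReal (q : QProb) : ℝ≥0∞ := ENNReal.ofReal ((q : ℚ) : ℝ)

/-! ### PCTL*(◊,□) and rPCTL*: shared syntax and semantics -/

mutual
/-- State formulas of PCTL*(◊,□) (equivalently, of rPCTL*):
`φ ::= p | ¬φ | φ∧φ | φ∨φ | φ→φ | P_{∼λ}[Φ]`. -/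
inductive SF (AP : Type) : Type
  | atom : AP → SF AP
  | not : SF AP → SF AP
  | and : SF AP → SF AP → SF AP
  | or : SF AP → SF AP → SF AP
  | imp : SF AP → SF AP → SF AP
  | prob : PCmp → QProb → PFm AP → SF AP

/-- Path formulas of PCTL*(◊,□) (equivalently, of rPCTL*, whose temporal
operators are written with dots): `Φ ::= φ | ¬Φ | Φ∧Φ | Φ∨Φ | Φ→Φ | X Φ | ◊ Φ | □ Φ`. -/
inductive PFm (AP : Type) : Type
  | state : SF AP → PFm AP
  | not : PFm AP → PFm AP
  | and : PFm AP → PFm AP → PFm AP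
  | or : PFm AP → PFm AP → PFm AP
  | imp : PFm AP → PFm AP → PFm AP
  | next : PFm AP → PFm AP
  | ev : PFm AP → PFm AP
  | alw : PFm AP → PFm AP
end

mutual
/-- `φ` contains no implications. -/
def SF.NoImp {AP : Type} : SF AP → Prop
  | .atom _ => True
  | .not φ => φ.NoImp
  | .and φ ψ => φ.NoImp ∧ ψ.NoImp
  | .or φ ψ => φ.NoImp ∧ ψ.NoImp
  | .imp _ _ => False
  | .prob _ _ Φ => Φ.NoImp

/-- `Φ` contains no implications. -/
def PFm.NoImp {AP : Type} : PFm AP → Prop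
  | .state φ => φ.NoImp
  | .not Φ => Φ.NoImp
  | .and Φ Ψ => Φ.NoImp ∧ Ψ.NoImp
  | .or Φ Ψ => Φ.NoImp ∧ Ψ.NoImp
  | .imp _ _ => False
  | .next Φ => Φ.NoImp
  | .ev Φ => Φ.NoImp
  | .alw Φ => Φ.NoImp
end

mutual
/-- The standard PCTL* semantics `M,s ⊨ φ` for state formulas, relative to the
family of cylinder-set measures `μ s`. -/
def SF.Sat {AP S : Type} [Fintype S] (M : DTMC AP S)
    (μ : ∀ s : S, MeasureTheory.Measure (M.Path s)) : SF AP → S → Prop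
  | .atom p, s => p ∈ M.label s
  | .not φ, s => ¬ SF.Sat M μ φ s
  | .and φ ψ, s => SF.Sat M μ φ s ∧ SF.Sat M μ ψ s
  | .or φ ψ, s => SF.Sat M μ φ s ∨ SF.Sat M μ ψ s
  | .imp φ ψ, s => SF.Sat M μ φ s → SF.Sat M μ ψ s
  | .prob c l Φ, s => c.holds (μ s { π | PFm.Sat M μ Φ π.toU }) l.toENNReal

/-- The standard PCTL* (i.e. LTL) semantics `M,π ⊨ Φ` for path formulas. -/
def PFm.Sat {AP S : Type} [Fintype S] (M : DTMC AP S)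
    (μ : ∀ s : S, MeasureTheory.Measure (M.Path s)) : PFm AP → M.PathU → Prop
  | .state φ, π => SF.Sat M μ φ (π.1 0)
  | .not Φ, π => ¬ PFm.Sat M μ Φ π
  | .and Φ Ψ, π => PFm.Sat M μ Φ π ∧ PFm.Sat M μ Ψ π
  | .or Φ Ψ, π => PFm.Sat M μ Φ π ∨ PFm.Sat M μ Ψ π
  | .imp Φ Ψ, π => PFm.Sat M μ Φ π → PFm.Sat M μ Ψ π
  | .next Φ, π => PFm.Sat M μ Φ (π.suffix 1)
  | .ev Φ, π => ∃ n, PFm.Sat M μ Φ (π.suffix n)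
  | .alw Φ, π => ∀ n, PFm.Sat M μ Φ (π.suffix n)
end

/-- The maximum of a set of truth values from `B4` (the least value `0000`
if the set is empty). -/
noncomputable def maxB4 (A : Set B4) : B4 :=
  if B4.t1111 ∈ A then .t1111
  else if B4.t0111 ∈ A then .t0111
  else if B4.t0011 ∈ A then .t0011
  else if B4.t0001 ∈ A then .t0001
  else .t0000

mutual
/-- The rPCTL* evaluation function `V_M` on state formulas, relative to the
family of cylinder-set measures `μ s`. -/
noncomputable def SF.val {AP S : Type} [Fintype S] (M : DTMC AP S)
    (μ : ∀ s : S, MeasureTheory.Measure (M.Path s)) : SF AP → S → TV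
  | .atom p, s => if p ∈ M.label s then TV.top else TV.bot
  | .not φ, s => if SF.val M μ φ s = TV.top then TV.bot else TV.top
  | .and φ ψ, s => (SF.val M μ φ s).inf (SF.val M μ ψ s)
  | .or φ ψ, s => (SF.val M μ φ s).sup (SF.val M μ ψ s)
  | .imp φ ψ, s =>
      if SF.val M μ φ s ≤ SF.val M μ ψ s then TV.top else SF.val M μ ψ s
  | .prob c l Φ, s =>
      (maxB4 { b | c.holds (μ s { π | (PFm.val M μ Φ π.toU).ge4 b }) l.toENNReal }).toTV

/-- The rPCTL* evaluation function `V_M` on path formulas. -/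
noncomputable def PFm.val {AP S : Type} [Fintype S] (M : DTMC AP S)
    (μ : ∀ s : S, MeasureTheory.Measure (M.Path s)) : PFm AP → M.PathU → TV
  | .state φ, π => SF.val M μ φ (π.1 0)
  | .not Φ, π => if PFm.val M μ Φ π = TV.top then TV.bot else TV.top
  | .and Φ Ψ, π => (PFm.val M μ Φ π).inf (PFm.val M μ Ψ π)
  | .or Φ Ψ, π => (PFm.val M μ Φ π).sup (PFm.val M μ Ψ π)
  | .imp Φ Ψ, π =>
      if PFm.val M μ Φ π ≤ PFm.val M μ Ψ π then TV.top else PFm.val M μ Ψ π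
  | .next Φ, π => PFm.val M μ Φ (π.suffix 1)
  | .ev Φ, π =>
      ⟨boolOf (∃ n, (PFm.val M μ Φ (π.suffix n)).b1 = true),
       boolOf (∃ n, (PFm.val M μ Φ (π.suffix n)).b2 = true),
       boolOf (∃ n, (PFm.val M μ Φ (π.suffix n)).b3 = true),
       boolOf (∃ n, (PFm.val M μ Φ (π.suffix n)).b4 = true)⟩
  | .alw Φ, π =>
      ⟨boolOf (∀ n, (PFm.val M μ Φ (π.suffix n)).b1 = true),
       boolOf (∃ m, ∀ n, m ≤ n → (PFm.val M μ Φ (π.suffix n)).b2 = true),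
       boolOf (∀ m, ∃ n, m ≤ n ∧ (PFm.val M μ Φ (π.suffix n)).b3 = true),
       boolOf (∃ n, (PFm.val M μ Φ (π.suffix n)).b4 = true)⟩
end

/-- In the rPCTL* path semantics, if all suffix values
`V_M(π[n..], Φ)` lie in `B4`, then (i) for every `b ∈ B4`, `V_M(π, ◊̇Φ) ⪰ b` iff
`V_M(π[n..], Φ) ⪰ b` for some `n`; and (ii) `V_M(π, □̇Φ) ⪰ 1111` iff
`V_M(π[n..], Φ) = 1111` for all `n`, `V_M(π, □̇Φ) ⪰ 0111` iff
`V_M(π[n..], Φ) ⪰ 0111` for all but finitely many `n`, `V_M(π, □̇Φ) ⪰ 0011` iff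
`V_M(π[n..], Φ) ⪰ 0011` for infinitely many `n`, and `V_M(π, □̇Φ) ⪰ 0001` iff
`V_M(π[n..], Φ) ⪰ 0001` for some `n`. -/
theorem rpctlstar_ev_alw_ge4_characterization {AP S : Type} [Fintype S]
    (M : DTMC AP S) (μ : ∀ s : S, MeasureTheory.Measure (M.Path s))
    (hμ : ∀ s : S, M.IsCylinderMeasure s (μ s))
    (Φ : PFm AP) (π : M.PathU)
    (h : ∀ n : ℕ, (PFm.val M μ Φ (π.suffix n)).InB4) :
    (∀ b : B4, (PFm.val M μ (.ev Φ) π).ge4 b ↔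
      ∃ n : ℕ, (PFm.val M μ Φ (π.suffix n)).ge4 b) ∧
    ((PFm.val M μ (.alw Φ) π).ge4 .t1111 ↔
      ∀ n : ℕ, PFm.val M μ Φ (π.suffix n) = TV.top) ∧
    ((PFm.val M μ (.alw Φ) π).ge4 .t0111 ↔
      ∃ m : ℕ, ∀ n : ℕ, m ≤ n → (PFm.val M μ Φ (π.suffix n)).ge4 .t0111) ∧
    ((PFm.val M μ (.alw Φ) π).ge4 .t0011 ↔
      ∀ m : ℕ, ∃ n : ℕ, m ≤ n ∧ (PFm.val M μ Φ (π.suffix n)).ge4 .t0011) ∧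
    ((PFm.val M μ (.alw Φ) π).ge4 .t0001 ↔
      ∃ n : ℕ, (PFm.val M μ Φ (π.suffix n)).ge4 .t0001) := by
  have hbo : ∀ P : Prop, boolOf P = true ↔ P := fun P => by
    simp [boolOf, @decide_eq_true_iff P (Classical.propDecidable P)]
  have htop : ∀ n, (PFm.val M μ Φ (π.suffix n)).b1 = true ↔
      PFm.val M μ Φ (π.suffix n) = TV.top := by
    intro n
    constructor
    · intro h1
      obtain ⟨h12, h23, h34⟩ := h n
      rw [h1] at h12
      have h2 : (PFm.val M μ Φ (π.suffix n)).b2 = true := le_antisymm le_top h12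
      rw [h2] at h23
      have h3 : (PFm.val M μ Φ (π.suffix n)).b3 = true := le_antisymm le_top h23
      rw [h3] at h34
      have h4 : (PFm.val M μ Φ (π.suffix n)).b4 = true := le_antisymm le_top h34
      cases hv : PFm.val M μ Φ (π.suffix n)
      rw [hv] at h1 h2 h3 h4
      simp_all [TV.top]
    · intro hv; rw [hv]; rfl
  refine ⟨?_, ?_, ?_, ?_, ?_⟩
  · intro b; cases b <;> simp [PFm.val, TV.ge4, hbo]
  · simp only [PFm.val, TV.ge4, hbo]
    exact forall_congr' htop
  · simp [PFm.val, TV.ge4, hbo]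
  · simp [PFm.val, TV.ge4, hbo]
  · simp [PFm.val, TV.ge4, hbo]
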